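/- Fix an integer p ≥ 2, f ∈ 𝓕, and a sequence (κ_n) of nonzero real numbers with κ_n → 0. Define E_{nk} := c_p ∫_{−1}^{1} (1−s²)^{(p−3)/2} ( log f(κ_n s²) )^k ds for k = 1, 2. Then, as n → ∞, the variance V_n := E_{n2} − E_{n1}² satisfies V_n = 2 κ_n² (p−1) / ( p² (p+2) ) + o(κ_n²). -/

import Mathlib

/-!
Write `φ = log ∘ f`. Since `φ(0) = 0` and `φ'(0) = f'(0)/f(0) = 1` with `φ'` differentiable at `0`,
the mean value theorem gives `φ(x) = x + O(x²)`, hence `φ(x)^k = x^k + O(x^{k+1})`. Averaging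
against the weight `(1-s²)^{(p-3)/2}` on `[-1,1]` turns this into
`E_{nk} = κ^k m_{2k} + O(κ^{k+1})`, where integration by parts gives the moments `m₂ = 1/p` and
`m₄ = 3/(p(p+2))`. So `V_n = κ²(m₄ - m₂²) + O(κ³)`, and `m₄ - m₂² = 2(p-1)/(p²(p+2))`.
-/

open MeasureTheory Filter Real Asymptotics
open scoped ENNReal NNReal Topology

noncomputable section

/-- The normalizing constant `c_p = 1 / ∫_{-1}^1 (1-s²)^{(p-3)/2} ds`. -/
def c0 (p : ℕ) : ℝ := 1 / ∫ s in (-1:ℝ)..1, (1 - s ^ 2) ^ (((p : ℝ) - 3) / 2)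

/-- `E_{nk} = c_p ∫_{-1}^1 (1-s²)^{(p-3)/2} (log f(κ s²))^k ds`. -/
def Emom (p : ℕ) (f : ℝ → ℝ) (κ : ℝ) (k : ℕ) : ℝ :=
  c0 p * ∫ s in (-1:ℝ)..1, (1 - s ^ 2) ^ (((p : ℝ) - 3) / 2) * (Real.log (f (κ * s ^ 2))) ^ k

open Set intervalIntegral

lemma isBigO_sub_sub_deriv_mul_sq {g : ℝ → ℝ} {a : ℝ}
    (hg : ∀ᶠ x in 𝓝 a, DifferentiableAt ℝ g x) (hg' : DifferentiableAt ℝ (deriv g) a) :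
    (fun x => g x - g a - deriv g a * (x - a)) =O[𝓝 a] (fun x => (x - a) ^ 2) := by
  obtain ⟨C, hC0, hC⟩ := hg'.hasDerivAt.isBigO_sub.exists_pos
  obtain ⟨δ, hδ, hnear⟩ := Metric.eventually_nhds_iff.mp (hg.and hC.bound)
  refine IsBigO.of_bound C (Metric.eventually_nhds_iff.mpr ⟨δ, hδ, fun x hx => ?_⟩)
  have hseg : ∀ y ∈ uIcc a x, ‖y - a‖ ≤ ‖x - a‖ := fun y hy => abs_sub_left_of_mem_uIcc hy
  have hnear_seg : ∀ y ∈ uIcc a x, dist y a < δ := fun y hy => (hseg y hy).trans_lt hx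
  have hmvt := (convex_uIcc a x).norm_image_sub_le_of_norm_hasDerivWithin_le
    (f := fun y => g y - deriv g a * (y - a)) (f' := fun y => deriv g y - deriv g a)
    (fun y hy => (((hnear (hnear_seg y hy)).1.hasDerivAt.sub
      (((hasDerivAt_id y).sub_const a).const_mul _)).congr_deriv (by simp)).hasDerivWithinAt)
    (fun y hy => (hnear (hnear_seg y hy)).2.trans
      (mul_le_mul_of_nonneg_left (hseg y hy) hC0.le))
    left_mem_uIcc right_mem_uIcc
  rw [norm_pow, sq, ← mul_assoc]
  refine le_of_eq_of_le ?_ hmvt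
  congr 1
  ring

lemma isBigO_log_sub_self {f : ℝ → ℝ} (hf_pos : ∀ x, 0 < f x)
    (hf_diff : ∀ᶠ x in 𝓝 (0:ℝ), DifferentiableAt ℝ f x)
    (hf_diff2 : DifferentiableAt ℝ (deriv f) 0) (hf0 : f 0 = 1) (hf'0 : deriv f 0 = 1) :
    (fun x => log (f x) - x) =O[𝓝 0] (fun x => x ^ 2) := by
  have hderiv : deriv (fun x => log (f x)) =ᶠ[𝓝 0] fun x => deriv f x / f x :=
    hf_diff.mono fun x hx => deriv.log hx (hf_pos x).ne'
  have key := isBigO_sub_sub_deriv_mul_sq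
    (hf_diff.mono fun x hx => hx.log (hf_pos x).ne')
    ((hf_diff2.div hf_diff.self_of_nhds (hf_pos 0).ne').congr_of_eventuallyEq hderiv)
  simpa [hderiv.eq_of_nhds, hf0, hf'0] using key

lemma isBigO_pow_sub_pow {φ : ℝ → ℝ} (hφ : (fun x => φ x - x) =O[𝓝 0] fun x => x ^ 2) (k : ℕ) :
    (fun x => φ x ^ k - x ^ k) =O[𝓝 0] fun x => x ^ (k + 1) := by
  have hφ1 : φ =O[𝓝 0] fun x => x := by
    have h : (fun x => φ x - x) =O[𝓝 0] fun x : ℝ => x :=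
      hφ.trans (by simpa using (isLittleO_pow_pow (𝕜 := ℝ) (by norm_num : 1 < 2)).isBigO)
    exact (h.add (isBigO_refl _ _)).congr_left fun x => by ring
  induction k with
  | zero => simpa using isBigO_zero _ _
  | succ k ih =>
    have h1 : (fun x => φ x * (φ x ^ k - x ^ k)) =O[𝓝 0] fun x => x ^ (k + 2) :=
      (hφ1.mul ih).congr_right fun x => by ring
    have h2 : (fun x => x ^ k * (φ x - x)) =O[𝓝 0] fun x => x ^ (k + 2) :=
      ((isBigO_refl _ _).mul hφ).congr_right fun x => by ring
    exact (h1.add h2).congr_left fun x => by ring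

lemma Asymptotics.IsBigO.exists_abs_comp_mul_sq_le {ψ : ℝ → ℝ} {m : ℕ}
    (hψ : ψ =O[𝓝 0] fun x => x ^ m) :
    ∃ C, ∀ᶠ κ in 𝓝 0, ∀ s ∈ Icc (-1:ℝ) 1, |ψ (κ * s ^ 2)| ≤ C * |κ| ^ m := by
  obtain ⟨C, hC0, hC⟩ := hψ.exists_pos
  obtain ⟨δ, hδ, hnear⟩ := Metric.eventually_nhds_iff.mp hC.bound
  refine ⟨C, Metric.eventually_nhds_iff.mpr ⟨δ, hδ, fun κ hκ s hs => ?_⟩⟩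
  have hs2 : |κ * s ^ 2| ≤ |κ| := by
    rw [abs_mul, abs_of_nonneg (sq_nonneg s)]
    exact mul_le_of_le_one_right (abs_nonneg κ) (by nlinarith [hs.1, hs.2])
  have hψκ := hnear (show dist (κ * s ^ 2) 0 < δ by
    rw [dist_zero_right, norm_eq_abs]
    exact hs2.trans_lt (by simpa using hκ))
  rw [norm_eq_abs, norm_eq_abs, abs_pow] at hψκ
  exact hψκ.trans (mul_le_mul_of_nonneg_left (pow_le_pow_left₀ (abs_nonneg _) hs2 m) hC0.le)

section Weight

variable {b : ℝ}

lemma intervalIntegrable_one_sub_sq_rpow (hb : -1 < b) :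
    IntervalIntegrable (fun s : ℝ => (1 - s ^ 2) ^ b) volume (-1) 1 := by
  have factor : EqOn (fun s : ℝ => (1 + s) ^ b * (1 - s) ^ b) (fun s => (1 - s ^ 2) ^ b)
      (Icc (-1) 1) := fun s hs => by
    dsimp only
    rw [← mul_rpow (by linarith [hs.1]) (by linarith [hs.2])]
    ring_nf
  have left : IntervalIntegrable (fun s : ℝ => (1 + s) ^ b * (1 - s) ^ b) volume (-1) 0 := by
    refine IntervalIntegrable.mul_continuousOn ?_ ?_
    · simpa [add_comm] using (intervalIntegrable_rpow' hb (a := 0) (b := 1)).comp_add_right 1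
    · rw [uIcc_of_le (by norm_num)]
      exact (continuousOn_const.sub continuousOn_id).rpow_const
        fun s hs => Or.inl (ne_of_gt (by simp only [Pi.sub_apply, id]; linarith [hs.2]))
  have right : IntervalIntegrable (fun s : ℝ => (1 + s) ^ b * (1 - s) ^ b) volume 0 1 := by
    refine IntervalIntegrable.continuousOn_mul ?_ ?_
    · simpa using ((intervalIntegrable_rpow' hb (a := 0) (b := 1)).comp_sub_left 1).symm
    · rw [uIcc_of_le (by norm_num)]
      exact (continuousOn_const.add continuousOn_id).rpow_const
        fun s hs => Or.inl (ne_of_gt (by simp only [Pi.add_apply, id]; linarith [hs.1]))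
  refine (left.trans right).congr ?_
  exact factor.mono (uIoc_of_le (by norm_num : (-1:ℝ) ≤ 1) ▸ Ioc_subset_Icc_self)

lemma intervalIntegrable_one_sub_sq_rpow_mul_pow (hb : -1 < b) (k : ℕ) :
    IntervalIntegrable (fun s : ℝ => (1 - s ^ 2) ^ b * s ^ k) volume (-1) 1 :=
  (intervalIntegrable_one_sub_sq_rpow hb).mul_continuousOn (continuous_pow k).continuousOn

lemma intervalIntegrable_one_sub_sq_rpow_mul_of_bound (hb : -1 < b) {φ : ℝ → ℝ}
    (hφm : Measurable φ) {B : ℝ} (hφB : ∀ s ∈ Icc (-1:ℝ) 1, |φ s| ≤ B) :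
    IntervalIntegrable (fun s : ℝ => (1 - s ^ 2) ^ b * φ s) volume (-1) 1 := by
  have hw := intervalIntegrable_one_sub_sq_rpow hb
  rw [intervalIntegrable_iff] at hw ⊢
  refine hw.mul_bdd (c := B) hφm.aestronglyMeasurable ?_
  refine ae_restrict_of_forall_mem measurableSet_uIoc fun s hs =>
    (norm_eq_abs _).trans_le (hφB s ?_)
  exact Ioc_subset_Icc_self (uIoc_of_le (by norm_num : (-1:ℝ) ≤ 1) ▸ hs)

lemma abs_integral_one_sub_sq_rpow_mul_le (hb : -1 < b) {φ : ℝ → ℝ} {B : ℝ}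
    (hφB : ∀ s ∈ Icc (-1:ℝ) 1, |φ s| ≤ B) :
    |∫ s in (-1:ℝ)..1, (1 - s ^ 2) ^ b * φ s| ≤ B * ∫ s in (-1:ℝ)..1, (1 - s ^ 2) ^ b := by
  rw [← intervalIntegral.integral_const_mul, ← norm_eq_abs]
  refine norm_integral_le_of_norm_le (by norm_num) (ae_of_all _ fun s hs => ?_)
    ((intervalIntegrable_one_sub_sq_rpow hb).const_mul B)
  have hw0 : 0 ≤ (1 - s ^ 2) ^ b := rpow_nonneg (by nlinarith [hs.1, hs.2]) b
  rw [norm_mul, norm_of_nonneg hw0, mul_comm B]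
  exact mul_le_mul_of_nonneg_left (hφB s (Ioc_subset_Icc_self hs)) hw0

lemma integral_one_sub_sq_rpow_pos (hb : -1 < b) :
    0 < ∫ s in (-1:ℝ)..1, (1 - s ^ 2) ^ b :=
  intervalIntegral_pos_of_pos_on (intervalIntegrable_one_sub_sq_rpow hb)
    (fun s hs => rpow_pos_of_pos (by nlinarith [hs.1, hs.2]) b) (by norm_num)

/-- Integration by parts against `(1 - s²)^(b+1) s^(k+1)`, which vanishes at `±1`. -/
lemma integral_one_sub_sq_rpow_mul_pow_add_two (hb : -1 < b) (k : ℕ) :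
    (2 * b + k + 3) * ∫ s in (-1:ℝ)..1, (1 - s ^ 2) ^ b * s ^ (k + 2)
      = (k + 1) * ∫ s in (-1:ℝ)..1, (1 - s ^ 2) ^ b * s ^ k := by
  have hint := intervalIntegrable_one_sub_sq_rpow_mul_pow hb
  have hderiv : ∀ s ∈ Ioo (-1:ℝ) 1, HasDerivAt (fun s : ℝ => (1 - s ^ 2) ^ (b + 1) * s ^ (k + 1))
      ((k + 1) * ((1 - s ^ 2) ^ b * s ^ k) - (2 * b + k + 3) * ((1 - s ^ 2) ^ b * s ^ (k + 2)))
      s := by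
    intro s hs
    have hpos : 0 < 1 - s ^ 2 := by nlinarith [hs.1, hs.2]
    refine ((((hasDerivAt_pow 2 s).const_sub 1).rpow_const (p := b + 1)
      (Or.inl hpos.ne')).mul (hasDerivAt_pow (k + 1) s)).congr_deriv ?_
    rw [add_sub_cancel_right, rpow_add_one hpos.ne']
    push_cast
    ring
  have hcont : ContinuousOn (fun s : ℝ => (1 - s ^ 2) ^ (b + 1) * s ^ (k + 1)) (Icc (-1) 1) :=
    ((continuousOn_const.sub (continuousOn_pow 2)).rpow_const fun _ _ => Or.inr (by linarith)).mul
      (continuousOn_pow _)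
  have hFTC := integral_eq_sub_of_hasDerivAt_of_le (by norm_num) hcont hderiv
    (((hint k).const_mul _).sub ((hint (k + 2)).const_mul _))
  rw [integral_sub ((hint k).const_mul _) ((hint (k + 2)).const_mul _),
    intervalIntegral.integral_const_mul, intervalIntegral.integral_const_mul] at hFTC
  norm_num [zero_rpow (show b + 1 ≠ 0 by linarith)] at hFTC
  linarith

lemma isBigO_integral_one_sub_sq_rpow_mul_comp (hb : -1 < b) {ψ : ℝ → ℝ} {m : ℕ}
    (hψ : ψ =O[𝓝 0] fun x => x ^ m) :
    (fun κ => ∫ s in (-1:ℝ)..1, (1 - s ^ 2) ^ b * ψ (κ * s ^ 2)) =O[𝓝 0] fun κ => κ ^ m := by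
  obtain ⟨C, hC⟩ := hψ.exists_abs_comp_mul_sq_le
  refine IsBigO.of_bound (C * ∫ s in (-1:ℝ)..1, (1 - s ^ 2) ^ b) (hC.mono fun κ hκ => ?_)
  rw [norm_eq_abs, norm_eq_abs, abs_pow, mul_right_comm]
  exact abs_integral_one_sub_sq_rpow_mul_le hb hκ

lemma eventually_intervalIntegrable_one_sub_sq_rpow_mul_comp (hb : -1 < b) {ψ : ℝ → ℝ} {m : ℕ}
    (hψm : Measurable ψ) (hψ : ψ =O[𝓝 0] fun x => x ^ m) :
    ∀ᶠ κ in 𝓝 0, IntervalIntegrable (fun s => (1 - s ^ 2) ^ b * ψ (κ * s ^ 2)) volume (-1) 1 := by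
  obtain ⟨C, hC⟩ := hψ.exists_abs_comp_mul_sq_le
  exact hC.mono fun κ hκ => intervalIntegrable_one_sub_sq_rpow_mul_of_bound hb
    (hψm.comp (measurable_const.mul (measurable_id.pow_const 2))) hκ

lemma isBigO_integral_one_sub_sq_rpow_mul_pow_comp_sub (hb : -1 < b) {φ : ℝ → ℝ}
    (hφm : Measurable φ) (hφ : (fun x => φ x - x) =O[𝓝 0] fun x => x ^ 2) (k : ℕ) :
    (fun κ => (∫ s in (-1:ℝ)..1, (1 - s ^ 2) ^ b * φ (κ * s ^ 2) ^ k)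
        - κ ^ k * ∫ s in (-1:ℝ)..1, (1 - s ^ 2) ^ b * s ^ (2 * k))
      =O[𝓝 0] fun κ => κ ^ (k + 1) := by
  have hpow := isBigO_pow_sub_pow hφ k
  have hφk : (fun x => φ x ^ k) =O[𝓝 0] fun x => x ^ k :=
    ((hpow.trans (isLittleO_pow_pow k.lt_succ_self).isBigO).add (isBigO_refl _ _)).congr_left
      fun x => by ring
  refine (isBigO_integral_one_sub_sq_rpow_mul_comp hb hpow).congr' ?_ EventuallyEq.rfl
  filter_upwards [eventually_intervalIntegrable_one_sub_sq_rpow_mul_comp hb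
    (hφm.pow_const k) hφk] with κ hκ
  rw [← intervalIntegral.integral_const_mul,
    ← integral_sub hκ ((intervalIntegrable_one_sub_sq_rpow_mul_pow hb _).const_mul _)]
  congr 1 with s
  ring

end Weight

section Sphere

variable {p : ℕ}

lemma neg_one_lt_sub_three_div_two (hp : 2 ≤ p) : -1 < ((p : ℝ) - 3) / 2 := by
  have : (2 : ℝ) ≤ p := by exact_mod_cast hp
  linarith

lemma c0_mul_integral_pow_two (hp : 2 ≤ p) :
    c0 p * ∫ s in (-1:ℝ)..1, (1 - s ^ 2) ^ (((p : ℝ) - 3) / 2) * s ^ 2 = 1 / p := by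
  have hb := neg_one_lt_sub_three_div_two hp
  have hrec := integral_one_sub_sq_rpow_mul_pow_add_two hb 0
  have hM0 := integral_one_sub_sq_rpow_pos hb
  simp only [CharP.cast_eq_zero, add_zero, zero_add, pow_zero, mul_one, one_mul] at hrec
  have hp0 : (0 : ℝ) < p := by positivity
  rw [c0, div_mul_eq_mul_div, one_mul, div_eq_div_iff hM0.ne' hp0.ne', one_mul, ← hrec]
  ring

lemma c0_mul_integral_pow_four (hp : 2 ≤ p) :
    c0 p * ∫ s in (-1:ℝ)..1, (1 - s ^ 2) ^ (((p : ℝ) - 3) / 2) * s ^ 4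
      = 3 / (p * (p + 2)) := by
  have hrec := integral_one_sub_sq_rpow_mul_pow_add_two (neg_one_lt_sub_three_div_two hp) 2
  have h2 := c0_mul_integral_pow_two hp
  have hp0 : (0 : ℝ) < p := by positivity
  have h2' := (div_eq_iff hp0.ne').mp h2.symm
  push_cast at hrec
  rw [eq_div_iff (by positivity)]
  linear_combination (c0 p * p) * hrec - 3 * h2'

lemma isBigO_Emom_sub (hp : 2 ≤ p) {f : ℝ → ℝ} (hm : Measurable fun x => log (f x))
    (hf : (fun x => log (f x) - x) =O[𝓝 0] fun x => x ^ 2) (k : ℕ) :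
    (fun κ => Emom p f κ k
        - κ ^ k * (c0 p * ∫ s in (-1:ℝ)..1, (1 - s ^ 2) ^ (((p : ℝ) - 3) / 2) * s ^ (2 * k)))
      =O[𝓝 0] fun κ => κ ^ (k + 1) :=
  ((isBigO_integral_one_sub_sq_rpow_mul_pow_comp_sub (neg_one_lt_sub_three_div_two hp) hm hf
    k).const_mul_left (c0 p)).congr_left fun κ => by rw [Emom]; ring

/-- `V - 2κ²(p-1)/(p²(p+2)) = (E₂ - κ²m₄) - (E₁ - κm₂)(E₁ + κm₂)` with `m₂ = 1/p` and
`m₄ = 3/(p(p+2))`, and the three factors are `O(κ³)`, `O(κ²)` and `O(κ)`. -/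
lemma isBigO_variance_sub (hp : 2 ≤ p) {f : ℝ → ℝ} (hm : Measurable fun x => log (f x))
    (hf : (fun x => log (f x) - x) =O[𝓝 0] fun x => x ^ 2) :
    (fun κ => (Emom p f κ 2 - Emom p f κ 1 ^ 2)
        - 2 * κ ^ 2 * ((p : ℝ) - 1) / ((p : ℝ) ^ 2 * ((p : ℝ) + 2)))
      =O[𝓝 0] fun κ => κ ^ 3 := by
  have h1 := isBigO_Emom_sub hp hm hf 1
  have h2 := isBigO_Emom_sub hp hm hf 2
  rw [mul_one, c0_mul_integral_pow_two hp] at h1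
  rw [show 2 * 2 = 4 from rfl, c0_mul_integral_pow_four hp] at h2
  have h1' : (fun κ => Emom p f κ 1 + κ ^ 1 * (1 / p)) =O[𝓝 0] fun κ => κ ^ 1 :=
    ((h1.trans (isLittleO_pow_pow (by norm_num : 1 < 2)).isBigO).add
      ((isBigO_refl (fun κ : ℝ => κ ^ 1) _).const_mul_left (2 / (p : ℝ)))).congr_left
        fun κ => by ring
  have hp0 : (p : ℝ) ≠ 0 := by positivity
  have hp2 : (p : ℝ) + 2 ≠ 0 := by positivity
  have h11 : (fun κ => (Emom p f κ 1 - κ ^ 1 * (1 / p)) * (Emom p f κ 1 + κ ^ 1 * (1 / p)))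
      =O[𝓝 0] fun κ => κ ^ 3 :=
    (h1.mul h1').congr_right fun κ => by ring
  refine (h2.sub h11).congr_left fun κ => ?_
  field_simp
  ring

end Sphere

theorem variance_log_density_expansion_general
    (p : ℕ) (hp : 2 ≤ p)
    (f : ℝ → ℝ) (hf_pos : ∀ x, 0 < f x) (hf_mono : Monotone f)
    (hf_diff : ∀ᶠ x in 𝓝 (0:ℝ), DifferentiableAt ℝ f x)
    (hf_diff2 : DifferentiableAt ℝ (deriv f) 0)
    (hf0 : f 0 = 1) (hf'0 : deriv f 0 = 1)
    (κ : ℕ → ℝ) (hκ : Tendsto κ atTop (𝓝 (0:ℝ))) :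
    (fun n => (Emom p f (κ n) 2 - (Emom p f (κ n) 1) ^ 2)
        - 2 * κ n ^ 2 * ((p:ℝ) - 1) / ((p:ℝ) ^ 2 * ((p:ℝ) + 2)))
      =o[atTop] (fun n => κ n ^ 2) := by
  have hm : Measurable fun x => log (f x) := measurable_log.comp hf_mono.measurable
  have hlog := isBigO_log_sub_self hf_pos hf_diff hf_diff2 hf0 hf'0
  exact ((isBigO_variance_sub hp hm hlog).trans_isLittleO
    (isLittleO_pow_pow (by norm_num : 2 < 3))).comp_tendsto hκ

/-- expansion of the variance `V_n = E_{n2} - E_{n1}²`.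
For `f ∈ 𝓕` and nonzero `κ_n → 0`,
`V_n = 2κ_n²(p-1)/(p²(p+2)) + o(κ_n²)`. -/
theorem variance_log_density_expansion
    (p : ℕ) (hp : 2 ≤ p)
    (f : ℝ → ℝ) (hf_pos : ∀ x, 0 < f x) (hf_mono : Monotone f)
    (hf_diff : ∀ᶠ x in 𝓝 (0:ℝ), DifferentiableAt ℝ f x)
    (hf_diff2 : DifferentiableAt ℝ (deriv f) 0)
    (hf0 : f 0 = 1) (hf'0 : deriv f 0 = 1)
    (κ : ℕ → ℝ) (hκ0 : ∀ n, κ n ≠ 0) (hκ : Tendsto κ atTop (𝓝 (0:ℝ))) :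
    (fun n => (Emom p f (κ n) 2 - (Emom p f (κ n) 1) ^ 2)
        - 2 * κ n ^ 2 * ((p:ℝ) - 1) / ((p:ℝ) ^ 2 * ((p:ℝ) + 2)))
      =o[atTop] (fun n => κ n ^ 2) :=
  variance_log_density_expansion_general p hp f hf_pos hf_mono hf_diff hf_diff2 hf0 hf'0 κ hκ

end
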